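/- arXiv:1111.3335 — 2 statements merged into one kernel-verified Lean document; each statement's English description precedes it below -/
import Mathlib

section
/- Let P : E → B and Q : D → B be Grothendieck fibrations over the same base B, and let F : D → E be a functor with P ∘ F = Q. If F is itself a Grothendieck fibration (as a functor), then F automatically preserves Cartesian arrows, i.e. F is a Cartesian functor over B. -/
open CategoryTheory

/-- A morphism lifts `f` along `F ⋙ P` iff its image under `F` lifts `f` along `P`. -/
lemma homLift_comp_iff_aux {ℬ 𝒟 𝒳 : Type*} [Category ℬ] [Category 𝒟] [Category 𝒳]
    (F : 𝒟 ⥤ 𝒳) (P : 𝒳 ⥤ ℬ) {R S : ℬ} (f : R ⟶ S) {a b : 𝒟} (φ : a ⟶ b) :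
    (F ⋙ P).IsHomLift f φ ↔ P.IsHomLift f (F.map φ) := by
  constructor
  · intro h
    subst_hom_lift (F ⋙ P) f φ
    exact inferInstanceAs (P.IsHomLift (P.map (F.map φ)) (F.map φ))
  · intro h
    subst_hom_lift P f (F.map φ)
    exact inferInstanceAs ((F ⋙ P).IsHomLift ((F ⋙ P).map φ) φ)

/-- A morphism `F` of fibrations over `ℬ` (i.e. a functor over `ℬ` between
fibrations `Q` and `P`) which is itself a Grothendieck fibration automatically preserves
Cartesian arrows, i.e. it is a Cartesian functor over `ℬ`. -/
theorem fibration_morphism_over_base_is_cartesian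
    {ℬ 𝒟 𝒳 : Type*} [Category ℬ] [Category 𝒟] [Category 𝒳]
    (P : 𝒳 ⥤ ℬ) (Q : 𝒟 ⥤ ℬ) [P.IsFibered] [Q.IsFibered]
    (F : 𝒟 ⥤ 𝒳) (hF : F ⋙ P = Q) [F.IsFibered] :
    ∀ {R S : ℬ} (f : R ⟶ S) {a b : 𝒟} (φ : a ⟶ b),
      Q.IsStronglyCartesian f φ → P.IsStronglyCartesian f (F.map φ) := by
  subst hF
  intro R S f a b φ hφ
  haveI := hφ
  haveI : P.IsHomLift f (F.map φ) := (homLift_comp_iff_aux F P f φ).mp hφ.toIsHomLift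
  constructor
  intro x g ψ hψ
  -- choose an `F`-cartesian lift `χ : d ⟶ b` of `ψ`
  obtain ⟨d, χ, hχ⟩ := Functor.IsPreFibered.exists_isCartesian' (p := F) ψ
  haveI := hχ
  haveI hχs : F.IsStronglyCartesian ψ χ := inferInstance
  have hd : F.obj d = x := IsHomLift.domain_eq F ψ χ
  have hχfac : F.map χ = eqToHom hd ≫ ψ ≫ eqToHom (IsHomLift.codomain_eq F ψ χ).symm :=
    IsHomLift.fac' F ψ χ
  -- `χ` lifts `g ≫ f` along `F ⋙ P`
  haveI hχlift : (F ⋙ P).IsHomLift (g ≫ f) χ := by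
    rw [homLift_comp_iff_aux, hχfac]
    infer_instance
  -- use strong cartesianity of `φ` over the base `ℬ` to get `τ : d ⟶ a`
  obtain ⟨τ, ⟨hτl, hτfac⟩, -⟩ :=
    CategoryTheory.Functor.IsStronglyCartesian.universal_property (F ⋙ P) f φ g (g ≫ f) rfl χ
  haveI := hτl
  refine ⟨eqToHom hd.symm ≫ F.map τ, ⟨?_, ?_⟩, ?_⟩
  · haveI : P.IsHomLift g (F.map τ) := (homLift_comp_iff_aux F P g τ).mp hτl
    infer_instance
  · rw [Category.assoc, ← F.map_comp, hτfac, hχfac]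
    simp
  · -- uniqueness
    rintro μ' ⟨hμ'l, hμ'fac⟩
    -- choose an `F`-cartesian lift `σ : e ⟶ a` of `μ'`
    obtain ⟨e, σ, hσ⟩ := Functor.IsPreFibered.exists_isCartesian' (p := F) μ'
    haveI := hσ
    have he : F.obj e = x := IsHomLift.domain_eq F μ' σ
    have hσfac : F.map σ = eqToHom he ≫ μ' ≫ eqToHom (IsHomLift.codomain_eq F μ' σ).symm :=
      IsHomLift.fac' F μ' σ
    haveI hσlift : (F ⋙ P).IsHomLift g σ := by
      rw [homLift_comp_iff_aux, hσfac]
      infer_instance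
    -- `σ ≫ φ` lifts `ψ` along `F`
    haveI : F.IsHomLift ψ (σ ≫ φ) := by
      apply IsHomLift.of_fac' F ψ (σ ≫ φ) he rfl
      rw [F.map_comp, hσfac]
      simp [hμ'fac]
    -- factor `σ ≫ φ` through `χ` via strong `F`-cartesianity of `χ`
    obtain ⟨ρ, ⟨hρl, hρfac⟩, -⟩ :=
      CategoryTheory.Functor.IsStronglyCartesian.universal_property F ψ χ (𝟙 x) ψ (by simp) (σ ≫ φ)
    haveI := hρl
    have hρfac' : F.map ρ = eqToHom he ≫ 𝟙 x ≫ eqToHom hd.symm := IsHomLift.fac' F (𝟙 x) ρ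
    -- `ρ` lifts `𝟙 (P.obj x)` along `F ⋙ P`
    haveI hρlift : (F ⋙ P).IsHomLift (𝟙 (P.obj x)) ρ := by
      rw [homLift_comp_iff_aux, hρfac']
      simp only [Category.id_comp]
      haveI h1 : P.IsHomLift (𝟙 (P.obj x)) (eqToHom he) :=
        IsHomLift.eqToHom_domain_lift_id he (congrArg P.obj he)
      haveI h2 : P.IsHomLift (𝟙 (P.obj x)) (eqToHom hd.symm) :=
        IsHomLift.eqToHom_codomain_lift_id hd.symm (congrArg P.obj hd)
      infer_instance
    haveI : (F ⋙ P).IsHomLift g (ρ ≫ τ) := IsHomLift.comp_lift_id_left (F ⋙ P) g τ ρ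
    -- both `σ` and `ρ ≫ τ` lift `g` and postcompose with `φ` to the same thing
    have hστ : σ = ρ ≫ τ := by
      apply CategoryTheory.Functor.IsStronglyCartesian.ext (F ⋙ P) f φ g
      rw [Category.assoc, hτfac, hρfac]
    -- conclude
    have : μ' = eqToHom he.symm ≫ F.map σ := by rw [hσfac]; simp
    rw [this, hστ, F.map_comp, hρfac']
    simp
end

section
/- Conversely, let P : E → B be a cloven Grothendieck fibration such that for each morphism f : A → B of B, the inverse image functor f^* : E_B → E_A admits a left adjoint f_* with unit η^f. Then P is also an opfibration: for each Y in E_A the composite Y → f^* f_* Y → f_* Y (unit followed by the Cartesian lift) is an opCartesian lift of f at Y. -/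
/-!
A Cartesian lift `ε X` of `f` identifies maps `Y ⟶ X` over `f` with fibre maps `Y ⟶ pb X`, and
the adjunction identifies those with fibre maps `ps Y ⟶ X`; by naturality of `ε`, the composite
bijection is precomposition with `unit ≫ ε (ps Y)`, which is therefore cocartesian with respect to
vertical maps. In a fibration this upgrades to strong cocartesianness: a map over `f ≫ g` factors
through a Cartesian lift of `g` by a map over `f`, to which the vertical universal property applies.
-/

open CategoryTheory Functor

variable {𝒮 𝒳 : Type*} [Category 𝒮] [Category 𝒳]

namespace CategoryTheory.Functor

theorem IsCocartesian.isStronglyCocartesian (p : 𝒳 ⥤ 𝒮) [p.IsFibered] {R S : 𝒮} {a b : 𝒳}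
    (f : R ⟶ S) (φ : a ⟶ b) [p.IsCocartesian f φ] : p.IsStronglyCocartesian f φ where
  universal_property' {b'} g φ' _ := by
    obtain ⟨c, ψ, _⟩ := IsPreFibered.exists_isCartesian p rfl g
    let τ := IsStronglyCartesian.map p g ψ (f' := f ≫ g) (g := f) rfl φ'
    refine ⟨IsCocartesian.map p f φ τ ≫ ψ, ⟨inferInstance, by simp [τ]⟩, ?_⟩
    rintro π ⟨_, hπ⟩
    rw [← IsStronglyCartesian.fac p g ψ (Category.id_comp g).symm π]
    congr 1
    apply IsCocartesian.map_uniq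
    exact IsStronglyCartesian.ext p g ψ f (by simp [τ, hπ])

end CategoryTheory.Functor

section AdjointInverseImage

variable {P : 𝒳 ⥤ 𝒮} {R S : 𝒮} {f : R ⟶ S} {pb : P.Fiber S ⥤ P.Fiber R}
  {ε : ∀ X : P.Fiber S, Fiber.fiberInclusion.obj (pb.obj X) ⟶ Fiber.fiberInclusion.obj X}
  {ps : P.Fiber R ⥤ P.Fiber S}

theorem unit_comp_cartesianLift_comp_eq_homEquiv
    (hεnat : ∀ {X X' : P.Fiber S} (u : X ⟶ X'),
      Fiber.fiberInclusion.map (pb.map u) ≫ ε X' = ε X ≫ Fiber.fiberInclusion.map u)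
    (adj : ps ⊣ pb) {Y : P.Fiber R} {X : P.Fiber S} (χ : ps.obj Y ⟶ X) :
    Fiber.fiberInclusion.map (adj.unit.app Y) ≫ ε (ps.obj Y) ≫ Fiber.fiberInclusion.map χ =
      Fiber.fiberInclusion.map (adj.homEquiv Y X χ) ≫ ε X := by
  rw [← hεnat, Adjunction.homEquiv_unit, Functor.map_comp, Category.assoc]

theorem isCocartesian_unit_comp_cartesianLift
    (hε : ∀ X : P.Fiber S, P.IsStronglyCartesian f (ε X))
    (hεnat : ∀ {X X' : P.Fiber S} (u : X ⟶ X'),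
      Fiber.fiberInclusion.map (pb.map u) ≫ ε X' = ε X ≫ Fiber.fiberInclusion.map u)
    (adj : ps ⊣ pb) (Y : P.Fiber R) :
    P.IsCocartesian f (Fiber.fiberInclusion.map (adj.unit.app Y) ≫ ε (ps.obj Y)) where
  toIsHomLift := IsHomLift.comp_lift_id_left P f _ _
  universal_property {b'} φ' _ := by
    obtain ⟨X, rfl⟩ : ∃ X : P.Fiber S, Fiber.fiberInclusion.obj X = b' :=
      ⟨Fiber.mk (IsHomLift.codomain_eq P f φ'), rfl⟩
    let τ := IsStronglyCartesian.map P f (ε X) (Category.id_comp f).symm φ'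
    let σ : Y ⟶ pb.obj X := ⟨τ, IsStronglyCartesian.map_isHomLift P f (ε X) _ φ'⟩
    have hσ : Fiber.fiberInclusion.map σ ≫ ε X = φ' :=
      IsStronglyCartesian.fac P f (ε X) (Category.id_comp f).symm φ'
    refine ⟨Fiber.fiberInclusion.map ((adj.homEquiv Y X).symm σ), ⟨inferInstance, ?_⟩, ?_⟩
    · rw [Category.assoc, unit_comp_cartesianLift_comp_eq_homEquiv hεnat, Equiv.apply_symm_apply, hσ]
    · rintro χ ⟨_, hχ⟩
      let χ' : ps.obj Y ⟶ X := ⟨χ, ‹_›⟩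
      show Fiber.fiberInclusion.map χ' = _
      congr 1
      rw [Equiv.eq_symm_apply]
      ext
      apply IsStronglyCartesian.ext P f (ε X) (𝟙 R)
      rw [← unit_comp_cartesianLift_comp_eq_homEquiv hεnat, hσ, ← hχ, Category.assoc]
      rfl

end AdjointInverseImage

/-- Let `P : 𝒳 ⥤ 𝒮` be a cloven fibration, `f : R ⟶ S` a morphism of the base,
`pb : Fiber P S ⥤ Fiber P R` the inverse image functor induced by the chosen Cartesian
lifts `ε`, and suppose `pb` admits a left adjoint `ps` with adjunction `adj` (whose unit is
`adj.unit`).  Then for every `Y` in the fibre over `R`, the composite of the unit with the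
Cartesian lift, `Y ⟶ pb (ps Y) ⟶ ps Y`, is an opCartesian lift of `f` at `Y`; hence `P` is
also an opfibration. -/
theorem unit_comp_cartesian_lift_isStronglyCocartesian (P : 𝒳 ⥤ 𝒮) [P.IsFibered]
    {R S : 𝒮} (f : R ⟶ S)
    (pb : P.Fiber S ⥤ P.Fiber R)
    (ε : ∀ X : P.Fiber S, Fiber.fiberInclusion.obj (pb.obj X) ⟶ Fiber.fiberInclusion.obj X)
    (hε : ∀ X : P.Fiber S, P.IsStronglyCartesian f (ε X))
    (hεnat : ∀ {X X' : P.Fiber S} (u : X ⟶ X'),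
      Fiber.fiberInclusion.map (pb.map u) ≫ ε X' = ε X ≫ Fiber.fiberInclusion.map u)
    (ps : P.Fiber R ⥤ P.Fiber S) (adj : ps ⊣ pb) :
    ∀ Y : P.Fiber R,
      P.IsStronglyCocartesian f
        (Fiber.fiberInclusion.map (adj.unit.app Y) ≫ ε (ps.obj Y)) := by
  intro Y
  have := isCocartesian_unit_comp_cartesianLift hε hεnat adj Y
  exact IsCocartesian.isStronglyCocartesian P f _
end
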